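/- Let σ ∈ S_n and define the lifted segments as in the mixed cell construction. Then ⟨σ̃, ũ_j⟩ = ∑_{i : σ(i) > j} (j − σ(i)) + (j − σ(j)) if σ(j) ≥ j (and without the extra term otherwise), and this quantity is nonpositive; hence the linear functional ⟨·, σ̃⟩ attains a value ≤ 0 on the lifted mixed cell, which is at most its value ⟨0, σ̃⟩ = 0 at the lifted origin. -/
import Mathlib


/-- `u_j(i)`: `2` if `σ(i) > j` and `i = j`, `1` if `σ(i) > j` and `i ≠ j`,
`0` if `σ(i) ≤ j`. -/
def uu {n : ℕ} (σ : Equiv.Perm (Fin n)) (j i : Fin n) : ℝ :=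
  if j < σ i then (if i = j then 2 else 1) else 0

/-- The inner product `⟨σ̃, ũ_j⟩` where `σ̃ = (-σ(1),…,-σ(n),1)` and
`ũ_j = (u_j, j·∑ᵢ u_j(i))` (1-based values). -/
noncomputable def ipU {n : ℕ} (σ : Equiv.Perm (Fin n)) (j : Fin n) : ℝ :=
  (∑ i, (-(((σ i : ℕ) : ℝ) + 1)) * uu σ j i)
    + (((j : ℕ) : ℝ) + 1) * (∑ i, uu σ j i)

theorem stmt17 {n : ℕ} (σ : Equiv.Perm (Fin n)) :
    (∀ j : Fin n,
      ipU σ j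
        = (∑ i ∈ Finset.univ.filter fun i => j < σ i,
            (((j : ℕ) : ℝ) - ((σ i : ℕ) : ℝ)))
          + (if j ≤ σ j then (((j : ℕ) : ℝ) - ((σ j : ℕ) : ℝ)) else 0)) ∧
    (∀ j : Fin n, ipU σ j ≤ 0) ∧
    (∑ j, ipU σ j) ≤ 0 := by
  have key : ∀ j : Fin n, ipU σ j
      = (∑ i ∈ Finset.univ.filter fun i => j < σ i,
          (((j : ℕ) : ℝ) - ((σ i : ℕ) : ℝ)))
        + (if j ≤ σ j then (((j : ℕ) : ℝ) - ((σ j : ℕ) : ℝ)) else 0) := by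
    intro j
    have h1 : ipU σ j = ∑ i, (((j : ℕ) : ℝ) - ((σ i : ℕ) : ℝ)) * uu σ j i := by
      unfold ipU
      rw [Finset.mul_sum, ← Finset.sum_add_distrib]
      exact Finset.sum_congr rfl fun i _ => by ring
    rw [h1, ← Finset.sum_filter_add_sum_filter_not Finset.univ (fun i => j < σ i)]
    have h2 : ∑ i ∈ Finset.univ.filter (fun i => ¬ j < σ i),
        (((j : ℕ) : ℝ) - ((σ i : ℕ) : ℝ)) * uu σ j i = 0 := by
      apply Finset.sum_eq_zero
      intro i hi
      simp only [Finset.mem_filter] at hi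
      simp [uu, hi.2]
    rw [h2, add_zero]
    have h3 : ∀ i ∈ Finset.univ.filter (fun i => j < σ i),
        (((j : ℕ) : ℝ) - ((σ i : ℕ) : ℝ)) * uu σ j i
        = (((j : ℕ) : ℝ) - ((σ i : ℕ) : ℝ))
          + (if i = j then (((j : ℕ) : ℝ) - ((σ i : ℕ) : ℝ)) else 0) := by
      intro i hi
      simp only [Finset.mem_filter] at hi
      simp only [uu, if_pos hi.2]
      split <;> ring
    rw [Finset.sum_congr rfl h3, Finset.sum_add_distrib]
    congr 1
    rw [Finset.sum_ite_eq' (Finset.univ.filter (fun i => j < σ i)) j]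
    simp only [Finset.mem_filter, Finset.mem_univ, true_and]
    rcases lt_trichotomy j (σ j) with h | h | h
    · rw [if_pos h, if_pos h.le]
    · have hz : ((j : ℕ) : ℝ) - ((σ j : ℕ) : ℝ) = 0 := by rw [← h]; ring
      rw [hz]; split <;> split <;> rfl
    · rw [if_neg (not_lt.mpr h.le), if_neg (not_le.mpr h)]
  have nonpos : ∀ j : Fin n, ipU σ j ≤ 0 := by
    intro j
    rw [key j]
    have hs : (∑ i ∈ Finset.univ.filter fun i => j < σ i,
        (((j : ℕ) : ℝ) - ((σ i : ℕ) : ℝ))) ≤ 0 := by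
      apply Finset.sum_nonpos
      intro i hi
      simp only [Finset.mem_filter] at hi
      have : (j : ℕ) < (σ i : ℕ) := hi.2
      have := (Nat.cast_lt (α := ℝ)).2 this
      linarith
    have ht : (if j ≤ σ j then (((j : ℕ) : ℝ) - ((σ j : ℕ) : ℝ)) else 0) ≤ 0 := by
      split
      · next h =>
        have : (j : ℕ) ≤ (σ j : ℕ) := h
        have := (Nat.cast_le (α := ℝ)).2 this
        linarith
      · exact le_refl 0
    linarith
  exact ⟨key, nonpos, Finset.sum_nonpos fun j _ => nonpos j⟩
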